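/- arXiv:1509.06610 — 3 statements merged into one kernel-verified Lean document; each statement's English description precedes it below -/
import Mathlib

section
/- Let $T : X \to Y$ be a bounded linear operator between Banach spaces and let $0 < \delta < \operatorname{uc}(T)$. Then there exist a closed subspace $X_0 \subset X$ and surjective isomorphisms $U : c_0 \to X_0$, $V : T(X_0) \to c_0$ with $(T|_{X_0})^{-1} = U \circ V$, $\|U\| \le 1$, and $\|V\| \le 2/\delta$. -/
open Filter Topology ZeroAtInfty Metric

noncomputable section

variable (𝕜 : Type*) [RCLike 𝕜]

/-- Measure of non-cauchyness of a sequence. -/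
noncomputable def caQ {Y : Type*} [NormedAddCommGroup Y] (y : ℕ → Y) : ℝ :=
  ⨅ n : ℕ, sSup { r : ℝ | ∃ k ≥ n, ∃ l ≥ n, r = ‖y k - y l‖ }

/-- Weakly unconditionally Cauchy series. -/
def WUC {X : Type*} [NormedAddCommGroup X] [NormedSpace 𝕜 X] (x : ℕ → X) : Prop :=
  ∀ f : StrongDual 𝕜 X, Summable fun n => ‖f (x n)‖

/-- wuC with `sup_{f ∈ B_{X*}} ∑ ‖f(x_n)‖ ≤ 1`. -/
def UnitWUC {X : Type*} [NormedAddCommGroup X] [NormedSpace 𝕜 X] (x : ℕ → X) : Prop :=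
  ∀ f : StrongDual 𝕜 X, ‖f‖ ≤ 1 → ∀ N : ℕ, ∑ i ∈ Finset.range N, ‖f (x i)‖ ≤ 1

/-- The quantity uc(T). -/
noncomputable def ucQ {X Y : Type*} [NormedAddCommGroup X] [NormedSpace 𝕜 X]
    [NormedAddCommGroup Y] [NormedSpace 𝕜 Y] (T : X →L[𝕜] Y) : ℝ :=
  sSup { c | ∃ x : ℕ → X, UnitWUC 𝕜 x ∧
    c = caQ (fun n => ∑ i ∈ Finset.range n, T (x i)) }

/-- Unconditionally converging operator. -/
def UncondConv {X Y : Type*} [NormedAddCommGroup X] [NormedSpace 𝕜 X]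
    [NormedAddCommGroup Y] [NormedSpace 𝕜 Y] (T : X →L[𝕜] Y) : Prop :=
  ∀ x : ℕ → X, WUC 𝕜 x → ∀ t : ℕ → 𝕜, (∃ M : ℝ, ∀ n, ‖t n‖ ≤ M) →
    ∃ y, Tendsto (fun N => ∑ i ∈ Finset.range N, t i • T (x i)) atTop (𝓝 y)

/-- The set T*(B_{Y*}) ⊆ X*. -/
def dualBallImage {X Y : Type*} [NormedAddCommGroup X] [NormedSpace 𝕜 X]
    [NormedAddCommGroup Y] [NormedSpace 𝕜 Y] (T : X →L[𝕜] Y) :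
    Set (StrongDual 𝕜 X) :=
  { g | ∃ f : StrongDual 𝕜 Y, ‖f‖ ≤ 1 ∧ g = f.comp T }

/-- The double-limit (Grothendieck) measure of weak non-compactness γ. -/
noncomputable def gammaM {Z : Type*} [NormedAddCommGroup Z] [NormedSpace 𝕜 Z] (A : Set Z) : ℝ :=
  sSup { c | ∃ (a : ℕ → Z) (f : ℕ → StrongDual 𝕜 Z) (g h : ℕ → 𝕜) (l₁ l₂ : 𝕜),
    (∀ n, a n ∈ A) ∧ (∀ m, ‖f m‖ ≤ 1) ∧
    (∀ n, Tendsto (fun m => f m (a n)) atTop (𝓝 (g n))) ∧ Tendsto g atTop (𝓝 l₁) ∧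
    (∀ m, Tendsto (fun n => f m (a n)) atTop (𝓝 (h m))) ∧ Tendsto h atTop (𝓝 l₂) ∧
    c = ‖l₁ - l₂‖ }

/-- A set is weakly compact: compact in the weak topology, i.e. its image under the
canonical map into `(Dual Z) → 𝕜` (with the product topology) is compact. -/
def WeaklyCompactSet {Z : Type*} [NormedAddCommGroup Z] [NormedSpace 𝕜 Z] (K : Set Z) : Prop :=
  IsCompact ((fun z => fun f : StrongDual 𝕜 Z => f z) '' K)

/-- Relatively weakly compact: contained in a weakly compact set. -/
def RelWeaklyCompact {Z : Type*} [NormedAddCommGroup Z] [NormedSpace 𝕜 Z] (A : Set Z) : Prop :=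
  ∃ K : Set Z, WeaklyCompactSet 𝕜 K ∧ A ⊆ K

/-- The de Blasi measure of weak non-compactness ω. -/
noncomputable def deBlasi {Z : Type*} [NormedAddCommGroup Z] [NormedSpace 𝕜 Z] (A : Set Z) : ℝ :=
  sInf { c | 0 ≤ c ∧ ∃ K : Set Z, K.Nonempty ∧ WeaklyCompactSet 𝕜 K ∧
    ∀ a ∈ A, Metric.infDist a K ≤ c }

/-- The quantity η(K) for bounded K ⊆ X*. -/
noncomputable def etaM {X : Type*} [NormedAddCommGroup X] [NormedSpace 𝕜 X]
    (K : Set (StrongDual 𝕜 X)) : ℝ :=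
  sSup { c | ∃ x : ℕ → X, UnitWUC 𝕜 x ∧
    c = Filter.limsup (fun n => sSup { r : ℝ | ∃ f ∈ K, r = ‖f (x n)‖ }) atTop }

/-- Right-Cauchy sequence: Cauchy for uniform convergence on weakly compact subsets of X*. -/
def RightCauchy {X : Type*} [NormedAddCommGroup X] [NormedSpace 𝕜 X] (x : ℕ → X) : Prop :=
  ∀ K : Set (StrongDual 𝕜 X), WeaklyCompactSet 𝕜 K →
    ∀ ε > (0:ℝ), ∃ N, ∀ k ≥ N, ∀ l ≥ N, ∀ f ∈ K, ‖f (x k) - f (x l)‖ ≤ ε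

/-- Weakly Cauchy sequence. -/
def WeakCauchySeq {X : Type*} [NormedAddCommGroup X] [NormedSpace 𝕜 X] (x : ℕ → X) : Prop :=
  ∀ f : StrongDual 𝕜 X, ∃ l : 𝕜, Tendsto (fun n => f (x n)) atTop (𝓝 l)

/-- Distance from an element of the bidual to (the canonical copy of) Y. -/
noncomputable def distToSpace {Y : Type*} [NormedAddCommGroup Y] [NormedSpace 𝕜 Y]
    (φ : StrongDual 𝕜 (StrongDual 𝕜 Y)) : ℝ :=
  Metric.infDist φ (Set.range (NormedSpace.inclusionInDoubleDual 𝕜 Y))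

variable {X Y : Type*} [NormedAddCommGroup X] [NormedSpace 𝕜 X]
  [NormedAddCommGroup Y] [NormedSpace 𝕜 Y]

/-- Rcc(T). -/
noncomputable def RccQ (T : X →L[𝕜] Y) : ℝ :=
  sSup { c | ∃ (x : ℕ → X) (φ : StrongDual 𝕜 (StrongDual 𝕜 Y)),
    (∀ n, ‖x n‖ ≤ 1) ∧ RightCauchy 𝕜 x ∧
    (∀ f : StrongDual 𝕜 Y, Tendsto (fun n => f (T (x n))) atTop (𝓝 (φ f))) ∧
    c = distToSpace 𝕜 φ }

/-- wcc(T). -/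
noncomputable def wccQ (T : X →L[𝕜] Y) : ℝ :=
  sSup { c | ∃ (x : ℕ → X) (φ : StrongDual 𝕜 (StrongDual 𝕜 Y)),
    (∀ n, ‖x n‖ ≤ 1) ∧ WeakCauchySeq 𝕜 x ∧
    (∀ f : StrongDual 𝕜 Y, Tendsto (fun n => f (T (x n))) atTop (𝓝 (φ f))) ∧
    c = distToSpace 𝕜 φ }

/-- Rcc_ω(T). -/
noncomputable def RccOmega (T : X →L[𝕜] Y) : ℝ :=
  sSup { c | ∃ x : ℕ → X, (∀ n, ‖x n‖ ≤ 1) ∧ RightCauchy 𝕜 x ∧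
    c = deBlasi 𝕜 (Set.range fun n => T (x n)) }

/-- wcc_ω(T). -/
noncomputable def wccOmega (T : X →L[𝕜] Y) : ℝ :=
  sSup { c | ∃ x : ℕ → X, (∀ n, ‖x n‖ ≤ 1) ∧ WeakCauchySeq 𝕜 x ∧
    c = deBlasi 𝕜 (Set.range fun n => T (x n)) }

/-- cc_ρ(T). -/
noncomputable def ccRho (T : X →L[𝕜] Y) : ℝ :=
  sSup { c | ∃ x : ℕ → X, (∀ n, ‖x n‖ ≤ 1) ∧ RightCauchy 𝕜 x ∧
    c = caQ (fun n => T (x n)) }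

/-- cc(T). -/
noncomputable def ccQ (T : X →L[𝕜] Y) : ℝ :=
  sSup { c | ∃ x : ℕ → X, (∀ n, ‖x n‖ ≤ 1) ∧ WeakCauchySeq 𝕜 x ∧
    c = caQ (fun n => T (x n)) }

/-- fix_{c₀}(T) (real scalars). -/
noncomputable def fixc0 {X Y : Type*} [NormedAddCommGroup X] [NormedSpace ℝ X]
    [NormedAddCommGroup Y] [NormedSpace ℝ Y] (T : X →L[ℝ] Y) : ℝ :=
  sSup (insert (0:ℝ) { c | ∃ (X₀ : Submodule ℝ X) (U : C₀(ℕ, ℝ) ≃L[ℝ] X₀)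
      (V : (X₀.map (T : X →ₗ[ℝ] Y)) ≃L[ℝ] C₀(ℕ, ℝ)),
    (∀ x : X₀, (U (V ⟨T x, Submodule.mem_map_of_mem x.2⟩) : X) = (x : X)) ∧
    c = (‖(U : C₀(ℕ, ℝ) →L[ℝ] X₀)‖ *
        ‖(V : (X₀.map (T : X →ₗ[ℝ] Y)) →L[ℝ] C₀(ℕ, ℝ))‖)⁻¹ })

end

/-! Gliding hump. Since `r < uc(T)`, some normalized wuC series `∑ xₙ` has `T`-partial sums
oscillating by more than `r` arbitrarily far out; cutting it into consecutive blocks gives a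
normalized wuC series `∑ uⱼ` with `‖T uⱼ‖ > r`. The vectors `T uⱼ` are weakly null. Pick norming
functionals `fⱼ` of them and a weak* cluster point `F`; along a sparse subsequence `φ`, the
functionals `Gₘ = f_{φ m} - F` have norm `≤ 2`, are `≥ r - ε` at `T u_{φ m}` and almost vanish at
the other `T u_{φ i}`. Then `U t = ∑ tᵢ u_{φ i}` has norm `≤ 1` on `c₀`, and testing `T U t`
against `Gₘ`, where `|tₘ| = ‖t‖`, gives `δ ‖t‖ ≤ 2 ‖T U t‖`. Take `X₀ = U(c₀)`. -/

namespace ZeroAtInftyContinuousMap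

variable {α β : Type*} [TopologicalSpace α] [NormedAddCommGroup β]

theorem norm_apply_le (f : C₀(α, β)) (x : α) : ‖f x‖ ≤ ‖f‖ := by
  rw [← norm_toBCF_eq_norm]
  exact f.toBCF.norm_coe_le_norm x

theorem exists_norm_apply_eq_norm [Nonempty α] (f : C₀(α, β)) : ∃ x, ‖f x‖ = ‖f‖ := by
  by_cases hf : f = 0
  · exact ⟨Classical.arbitrary α, by simp [hf]⟩
  obtain ⟨x₀, hx₀⟩ : ∃ x₀, f x₀ ≠ 0 := by
    by_contra! h
    exact hf (ext h)
  have hsmall : ∀ᶠ x in cocompact α, ‖f x‖ ≤ ‖f x₀‖ :=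
    (zero_at_infty f).norm.eventually (ge_mem_nhds (by simpa using hx₀))
  obtain ⟨x, hx⟩ := (continuous_norm.comp f.continuous).exists_forall_ge' x₀ hsmall
  refine ⟨x, le_antisymm (f.norm_apply_le x) ?_⟩
  rw [← norm_toBCF_eq_norm]
  exact (BoundedContinuousFunction.norm_le (norm_nonneg _)).2 hx

theorem tendsto_atTop_zero (f : C₀(ℕ, β)) : Tendsto f atTop (𝓝 0) :=
  cocompact_eq_atTop (α := ℕ) ▸ zero_at_infty f

end ZeroAtInftyContinuousMap

namespace UnitWUC

variable {𝕜 X : Type*} [RCLike 𝕜] [NormedAddCommGroup X] [NormedSpace 𝕜 X] {x : ℕ → X}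

theorem zero : UnitWUC 𝕜 (0 : ℕ → X) := fun f _ N => by simp

theorem sum_norm_le (hx : UnitWUC 𝕜 x) (f : StrongDual 𝕜 X) (s : Finset ℕ) :
    ∑ i ∈ s, ‖f (x i)‖ ≤ ‖f‖ := by
  obtain ⟨N, hN⟩ := s.exists_nat_subset_range
  refine (Finset.sum_le_sum_of_subset_of_nonneg hN fun _ _ _ => norm_nonneg _).trans ?_
  rcases eq_or_ne f 0 with rfl | hf
  · simp
  have hf' : 0 < ‖f‖ := norm_pos_iff.2 hf
  have hunit : ‖(‖f‖⁻¹ : 𝕜) • f‖ ≤ 1 := by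
    rw [norm_smul, norm_inv, RCLike.norm_ofReal, abs_norm, inv_mul_cancel₀ hf'.ne']
  have := hx _ hunit N
  simp only [smul_apply, norm_smul, norm_inv, RCLike.norm_ofReal, abs_norm,
    ← Finset.mul_sum] at this
  rwa [inv_mul_le_iff₀ hf', mul_one] at this

theorem comp_injective (hx : UnitWUC 𝕜 x) {φ : ℕ → ℕ} (hφ : φ.Injective) :
    UnitWUC 𝕜 (x ∘ φ) := by
  classical
  intro f hf N
  rw [Function.comp_def, ← Finset.sum_image (f := fun i => ‖f (x i)‖) fun a _ b _ h => hφ h]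
  exact (hx.sum_norm_le f _).trans hf

theorem sum_Ico (hx : UnitWUC 𝕜 x) {a b : ℕ → ℕ} (hab : ∀ j, a j ≤ b j)
    (hba : ∀ j, b j ≤ a (j + 1)) : UnitWUC 𝕜 fun j => ∑ q ∈ Finset.Ico (a j) (b j), x q := by
  intro f hf N
  suffices ∑ j ∈ Finset.range N, ‖f (∑ q ∈ Finset.Ico (a j) (b j), x q)‖ ≤
      ∑ q ∈ Finset.range (a N), ‖f (x q)‖ from this.trans (hx f hf _)
  induction N with
  | zero => exact Finset.sum_nonneg fun _ _ => norm_nonneg _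
  | succ N ih =>
    calc ∑ j ∈ Finset.range (N + 1), ‖f (∑ q ∈ Finset.Ico (a j) (b j), x q)‖
        ≤ ∑ q ∈ Finset.range (a N), ‖f (x q)‖ + ∑ q ∈ Finset.Ico (a N) (b N), ‖f (x q)‖ := by
          rw [Finset.sum_range_succ, map_sum]
          exact add_le_add ih (norm_sum_le _ _)
      _ = ∑ q ∈ Finset.range (b N), ‖f (x q)‖ := Finset.sum_range_add_sum_Ico _ (hab N)
      _ ≤ ∑ q ∈ Finset.range (a (N + 1)), ‖f (x q)‖ :=
          Finset.sum_le_sum_of_subset_of_nonneg (Finset.range_subset_range.2 (hba N))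
            fun _ _ _ => norm_nonneg _

theorem tendsto_apply_zero (hx : UnitWUC 𝕜 x) (f : StrongDual 𝕜 X) :
    Tendsto (fun n => f (x n)) atTop (𝓝 0) := by
  have : Summable fun n => ‖f (x n)‖ :=
    summable_of_sum_range_le (c := ‖f‖) (fun _ => norm_nonneg _) fun N => hx.sum_norm_le f _
  exact tendsto_zero_iff_norm_tendsto_zero.2 this.tendsto_atTop_zero

theorem norm_sum_smul_le (hx : UnitWUC 𝕜 x) (s : Finset ℕ) {c : ℕ → 𝕜} {B : ℝ} (hB : 0 ≤ B)
    (hc : ∀ i ∈ s, ‖c i‖ ≤ B) : ‖∑ i ∈ s, c i • x i‖ ≤ B := by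
  obtain ⟨g, hg, hgz⟩ := exists_dual_vector'' 𝕜 (∑ i ∈ s, c i • x i)
  calc ‖∑ i ∈ s, c i • x i‖ = ‖g (∑ i ∈ s, c i • x i)‖ := by
        rw [hgz, RCLike.norm_ofReal, abs_norm]
    _ ≤ ∑ i ∈ s, ‖c i‖ * ‖g (x i)‖ := by
        simpa only [map_sum, map_smul, smul_eq_mul, norm_mul] using
          norm_sum_le s fun i => c i * g (x i)
    _ ≤ ∑ i ∈ s, B * ‖g (x i)‖ := by gcongr with i hi; exact hc i hi
    _ = B * ∑ i ∈ s, ‖g (x i)‖ := (Finset.mul_sum _ _ _).symm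
    _ ≤ B * ‖g‖ := by gcongr; exact hx.sum_norm_le g s
    _ ≤ B := mul_le_of_le_one_right hB hg

theorem norm_tsum_smul_le (hx : UnitWUC 𝕜 x) {t : ℕ → 𝕜} {B : ℝ} (hB : 0 ≤ B)
    (ht : ∀ i, ‖t i‖ ≤ B) : ‖∑' i, t i • x i‖ ≤ B := by
  by_cases hs : Summable fun i => t i • x i
  · exact le_of_tendsto' hs.hasSum.norm fun s => hx.norm_sum_smul_le s hB fun i _ => ht i
  · simpa [tsum_eq_zero_of_not_summable hs] using hB

theorem summable_smul [CompleteSpace X] (hx : UnitWUC 𝕜 x) {t : ℕ → 𝕜}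
    (ht : Tendsto t atTop (𝓝 0)) : Summable fun i => t i • x i := by
  rw [summable_iff_vanishing_norm]
  intro ε hε
  obtain ⟨N, hN⟩ := Metric.tendsto_atTop.1 ht (ε / 2) (half_pos hε)
  refine ⟨Finset.range N, fun s hs => ?_⟩
  refine (hx.norm_sum_smul_le s (half_pos hε).le fun i hi => ?_).trans_lt (half_lt_self hε)
  have hi : N ≤ i := by simpa using Finset.disjoint_left.1 hs hi
  simpa using (hN i hi).le

variable [CompleteSpace X]

noncomputable def synthesis (hx : UnitWUC 𝕜 x) : C₀(ℕ, 𝕜) →L[𝕜] X :=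
  LinearMap.mkContinuous
    { toFun := fun t => ∑' i, t i • x i
      map_add' := fun t s => by
        simp only [ZeroAtInftyContinuousMap.coe_add, Pi.add_apply, add_smul]
        exact (hx.summable_smul t.tendsto_atTop_zero).tsum_add
          (hx.summable_smul s.tendsto_atTop_zero)
      map_smul' := fun c t => by
        simp only [ZeroAtInftyContinuousMap.coe_smul, Pi.smul_apply, smul_eq_mul, mul_smul,
          RingHom.id_apply]
        exact (hx.summable_smul t.tendsto_atTop_zero).tsum_const_smul c }
    1 fun t => by
      rw [one_mul]
      exact hx.norm_tsum_smul_le (norm_nonneg t) t.norm_apply_le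

theorem hasSum_synthesis (hx : UnitWUC 𝕜 x) (t : C₀(ℕ, 𝕜)) :
    HasSum (fun i => t i • x i) (hx.synthesis t) :=
  (hx.summable_smul t.tendsto_atTop_zero).hasSum

theorem norm_synthesis_le (hx : UnitWUC 𝕜 x) : ‖hx.synthesis‖ ≤ 1 :=
  LinearMap.mkContinuous_norm_le _ zero_le_one _

end UnitWUC

theorem exists_lt_norm_sub_of_lt_caQ {Y : Type*} [NormedAddCommGroup Y] {y : ℕ → Y} {r : ℝ}
    (hr : 0 ≤ r) (h : r < caQ y) (n : ℕ) : ∃ l k, n ≤ l ∧ l < k ∧ r < ‖y k - y l‖ := by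
  have hbdd : BddBelow (Set.range fun n => sSup {r : ℝ | ∃ k ≥ n, ∃ l ≥ n, r = ‖y k - y l‖}) :=
    ⟨0, by
      rintro _ ⟨m, rfl⟩
      exact Real.sSup_nonneg fun _ ⟨_, _, _, _, h⟩ => h ▸ norm_nonneg _⟩
  obtain ⟨_, ⟨k, hk, l, hl, rfl⟩, hlt⟩ :=
    exists_lt_of_lt_csSup (by exact ⟨_, n, le_rfl, n, le_rfl, rfl⟩) (h.trans_le (ciInf_le hbdd n))
  rcases lt_trichotomy l k with hlk | rfl | hkl
  · exact ⟨l, k, hl, hlk, hlt⟩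
  · simp only [sub_self, norm_zero] at hlt
    exact absurd hr hlt.not_ge
  · exact ⟨k, l, hk, hkl, by rwa [norm_sub_rev]⟩

theorem exists_unitWUC_lt_norm_of_lt_ucQ {𝕜 X Y : Type*} [RCLike 𝕜] [NormedAddCommGroup X]
    [NormedSpace 𝕜 X] [NormedAddCommGroup Y] [NormedSpace 𝕜 Y] (T : X →L[𝕜] Y) {r : ℝ}
    (hr : 0 ≤ r) (h : r < ucQ 𝕜 T) : ∃ u : ℕ → X, UnitWUC 𝕜 u ∧ ∀ j, r < ‖T (u j)‖ := by
  obtain ⟨_, ⟨x, hx, rfl⟩, hlt⟩ := exists_lt_of_lt_csSup (by exact ⟨_, 0, UnitWUC.zero, rfl⟩) h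
  choose L K hnL hLK hosc using exists_lt_norm_sub_of_lt_caQ hr hlt
  -- the blocks are `[L (e j), K (e j))`, where `e (j + 1) = K (e j)`
  let e : ℕ → ℕ := fun j => Nat.rec 0 (fun _ p => K p) j
  refine ⟨_, hx.sum_Ico (a := L ∘ e) (b := K ∘ e) (fun j => (hLK _).le)
    (fun j => hnL (e (j + 1))), fun j => ?_⟩
  simpa [map_sum, Finset.sum_Ico_eq_sub _ (hLK _).le] using hosc (e j)

theorem exists_seq_of_forall_exists_next {α : Type*} [Nonempty α] (P : (ℕ → α) → ℕ → α → Prop)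
    (hP : ∀ prev m, ∃ a, P prev m a)
    (hlocal : ∀ prev prev' m a, (∀ i < m, prev i = prev' i) → P prev m a → P prev' m a) :
    ∃ φ : ℕ → α, ∀ m, P φ m (φ m) := by
  classical
  let extend : (m : ℕ) → ((i : ℕ) → i < m → α) → ℕ → α :=
    fun m ih i => if h : i < m then ih i h else Classical.arbitrary α
  let φ : ℕ → α := fun m =>
    Nat.strongRec (motive := fun _ => α) (fun m ih => (hP (extend m ih) m).choose) m
  have hφ : ∀ m, φ m = (hP (extend m fun i _ => φ i) m).choose := fun m => Nat.strongRec_eq _ m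
  refine ⟨φ, fun m => ?_⟩
  have hspec := (hP (extend m fun i _ => φ i) m).choose_spec
  rw [← hφ m] at hspec
  exact hlocal _ _ _ _ (fun i hi => by simp [extend, hi]) hspec

theorem StrongDual.exists_frequently_forall_norm_sub_lt {𝕜 Y : Type*} [RCLike 𝕜]
    [NormedAddCommGroup Y] [NormedSpace 𝕜 Y] (f : ℕ → StrongDual 𝕜 Y) (hf : ∀ j, ‖f j‖ ≤ 1) :
    ∃ F : StrongDual 𝕜 Y, ‖F‖ ≤ 1 ∧
      ∀ (s : Finset Y) {η : ℝ}, 0 < η → ∃ᶠ j in atTop, ∀ y ∈ s, ‖f j y - F y‖ < η := by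
  obtain ⟨F, hF, hclus⟩ := (WeakDual.isCompact_closedBall (𝕜 := 𝕜) (E := Y) 0 1).exists_clusterPt
    (f := map (StrongDual.toWeakDual ∘ f) atTop)
    (le_principal_iff.2 (mem_map.2 (univ_mem' fun j => by simpa using hf j)))
  refine ⟨WeakDual.toStrongDual F, by simpa using hF, fun s η hη => ?_⟩
  have hnhds : (⋂ y ∈ s, (fun g : WeakDual 𝕜 Y => g y) ⁻¹' ball (F y) η) ∈ 𝓝 F :=
    (biInter_finset_mem s).2 fun y _ =>
      (WeakDual.eval_continuous y).continuousAt.preimage_mem_nhds (ball_mem_nhds _ hη)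
  refine (mapClusterPt_iff_frequently.1 hclus _ hnhds).mono fun j hj y hy => ?_
  simpa [dist_eq_norm] using Set.mem_iInter₂.1 hj y hy

theorem exists_strictMono_gliding_hump {Y : Type*} [NormedAddCommGroup Y] [NormedSpace ℝ Y]
    {v : ℕ → Y} (hnull : ∀ h : StrongDual ℝ Y, Tendsto (fun j => h (v j)) atTop (𝓝 0))
    (f : ℕ → StrongDual ℝ Y) (F : StrongDual ℝ Y)
    (hnear : ∀ (s : Finset Y) {η : ℝ}, 0 < η → ∃ᶠ j in atTop, ∀ y ∈ s, ‖f j y - F y‖ < η)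
    {b : ℕ → ℝ} (hb : ∀ m, 0 < b m) :
    ∃ φ : ℕ → ℕ, StrictMono φ ∧ ∀ m, (∀ i < m, |f (φ m) (v (φ i)) - F (v (φ i))| < b m ∧
      |f (φ i) (v (φ m))| < b m) ∧ |F (v (φ m))| < b m := by
  classical
  have hsmall : ∀ (h : StrongDual ℝ Y) m, ∀ᶠ j in atTop, |h (v j)| < b m := fun h m => by
    simpa using (hnull h).abs.eventually (gt_mem_nhds (by simpa using hb m))
  let P : (ℕ → ℕ) → ℕ → ℕ → Prop := fun prev m j =>
    (∀ i < m, prev i < j ∧ |f j (v (prev i)) - F (v (prev i))| < b m ∧ |f (prev i) (v j)| < b m)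
      ∧ |F (v j)| < b m
  have hP : ∀ prev m, ∃ j, P prev m j := fun prev m => by
    have hev : ∀ᶠ j in atTop,
        (∀ i ∈ Finset.range m, prev i < j ∧ |f (prev i) (v j)| < b m) ∧ |F (v j)| < b m :=
      ((Finset.eventually_all _).2 fun i _ => (eventually_gt_atTop _).and (hsmall _ m)).and
        (hsmall F m)
    obtain ⟨j, hnear_j, hev_j, hF_j⟩ :=
      ((hnear ((Finset.range m).image (v ∘ prev)) (hb m)).and_eventually hev).exists
    refine ⟨j, fun i hi => ⟨(hev_j i (Finset.mem_range.2 hi)).1, ?_,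
      (hev_j i (Finset.mem_range.2 hi)).2⟩, hF_j⟩
    simpa using hnear_j _ (Finset.mem_image_of_mem _ (Finset.mem_range.2 hi))
  obtain ⟨φ, hφ⟩ := exists_seq_of_forall_exists_next P hP
    fun prev prev' m j hpp ⟨hprev, hFj⟩ => ⟨fun i hi => hpp i hi ▸ hprev i hi, hFj⟩
  exact ⟨φ, strictMono_nat_of_lt_succ fun m => ((hφ (m + 1)).1 m m.lt_succ_self).1,
    fun m => ⟨fun i hi => ((hφ m).1 i hi).2, (hφ m).2⟩⟩

theorem exists_almost_biorthogonal {Y : Type*} [NormedAddCommGroup Y] [NormedSpace ℝ Y]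
    {v : ℕ → Y} {r ε : ℝ} (hε : 0 < ε) (hv : ∀ j, r < ‖v j‖)
    (hnull : ∀ h : StrongDual ℝ Y, Tendsto (fun j => h (v j)) atTop (𝓝 0)) :
    ∃ φ : ℕ → ℕ, StrictMono φ ∧ ∃ G : ℕ → StrongDual ℝ Y, (∀ m, ‖G m‖ ≤ 2) ∧
      (∀ m, r - ε ≤ G m (v (φ m))) ∧ ∀ m i, i ≠ m → |G m (v (φ i))| ≤ ε * (1 / 2) ^ i := by
  choose f hf hfv using fun j => exists_dual_vector'' ℝ (v j)
  obtain ⟨F, hF, hnear⟩ := StrongDual.exists_frequently_forall_norm_sub_lt f hf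
  set b : ℕ → ℝ := fun m => ε / 2 * (1 / 2) ^ m with hb
  have hb0 : ∀ m, 0 < b m := fun m => by positivity
  have hb_le : ∀ m, b m ≤ ε / 2 := fun m =>
    mul_le_of_le_one_right (by positivity) (pow_le_one₀ (by norm_num) (by norm_num))
  obtain ⟨φ, hφ_mono, hφ⟩ := exists_strictMono_gliding_hump hnull f F hnear hb0
  refine ⟨φ, hφ_mono, fun m => f (φ m) - F, fun m => ?_, fun m => ?_, fun m i him => ?_⟩
  · linarith [norm_sub_le (f (φ m)) F, hf (φ m)]
  · have hdiag : (f (φ m) - F) (v (φ m)) = ‖v (φ m)‖ - F (v (φ m)) := by simp [hfv]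
    linarith [hv (φ m), (abs_lt.1 (hφ m).2).2, hb_le m]
  · have hbi : b i + b i = ε * (1 / 2) ^ i := by ring
    rcases him.lt_or_gt with hi | hi
    · calc |(f (φ m) - F) (v (φ i))| = |f (φ m) (v (φ i)) - F (v (φ i))| := rfl
        _ ≤ b m := ((hφ m).1 i hi).1.le
        _ ≤ b i := mul_le_mul_of_nonneg_left
          (pow_le_pow_of_le_one (by norm_num) (by norm_num) hi.le) (by positivity)
        _ ≤ ε * (1 / 2) ^ i := by linarith [hb0 i]
    · calc |(f (φ m) - F) (v (φ i))| ≤ |f (φ m) (v (φ i))| + |F (v (φ i))| := abs_sub _ _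
        _ ≤ b i + b i := add_le_add ((hφ i).1 m hi).2.le (hφ i).2.le
        _ = ε * (1 / 2) ^ i := hbi

theorem abs_mul_sub_le_abs_apply_of_hasSum {Y : Type*} [NormedAddCommGroup Y] [NormedSpace ℝ Y]
    {y : ℕ → Y} {t : ℕ → ℝ} {s : Y} (hs : HasSum (fun i => t i • y i) s) (G : StrongDual ℝ Y)
    {m : ℕ} {a ε : ℝ} (ha : a ≤ G (y m)) (hoff : ∀ i, i ≠ m → |G (y i)| ≤ ε * (1 / 2) ^ i)
    (ht : ∀ i, |t i| ≤ |t m|) : |t m| * (a - 2 * ε) ≤ |G s| := by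
  classical
  have hε : 0 ≤ ε := nonneg_of_mul_nonneg_left ((abs_nonneg _).trans (hoff (m + 1) (by omega)))
    (by positivity)
  have hGs : HasSum (fun i => t i * G (y i)) (G s) := by simpa using hs.mapL G
  have htail : |G s - t m * G (y m)| ≤ |t m| * ε * 2 := by
    rw [← Real.norm_eq_abs, ← (hasSum_ite_sub_hasSum hGs m).tsum_eq]
    refine tsum_of_norm_bounded (hasSum_geometric_two.mul_left (|t m| * ε)) fun i => ?_
    split_ifs with him
    · simp only [norm_zero]; positivity
    · rw [Real.norm_eq_abs, abs_mul, mul_assoc]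
      exact mul_le_mul (ht i) (hoff i him) (abs_nonneg _) (abs_nonneg _)
  have hdiag : |t m| * a ≤ |t m * G (y m)| := by
    rw [abs_mul]
    exact mul_le_mul_of_nonneg_left (ha.trans (le_abs_self _)) (abs_nonneg _)
  linarith [abs_sub_abs_le_abs_sub (t m * G (y m)) (G s), abs_sub_comm (t m * G (y m)) (G s)]

theorem exists_c₀_map_bounded_below_of_lt_ucQ {X Y : Type*} [NormedAddCommGroup X]
    [NormedSpace ℝ X] [CompleteSpace X] [NormedAddCommGroup Y] [NormedSpace ℝ Y] (T : X →L[ℝ] Y)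
    {δ : ℝ} (hδ0 : 0 < δ) (hδ : δ < ucQ ℝ T) :
    ∃ U : C₀(ℕ, ℝ) →L[ℝ] X, ‖U‖ ≤ 1 ∧ ∀ t, ‖t‖ ≤ 2 / δ * ‖T (U t)‖ := by
  obtain ⟨r, hδr, hr⟩ := exists_between hδ
  obtain ⟨u, hu, hTu⟩ := exists_unitWUC_lt_norm_of_lt_ucQ T (by linarith) hr
  obtain ⟨φ, hφ, G, hG, hdiag, hoff⟩ := exists_almost_biorthogonal (v := fun j => T (u j))
    (ε := (r - δ) / 3) (by linarith) hTu fun h => hu.tendsto_apply_zero (h.comp T)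
  have hw := hu.comp_injective hφ.injective
  refine ⟨hw.synthesis, hw.norm_synthesis_le, fun t => ?_⟩
  obtain ⟨m, hm⟩ := t.exists_norm_apply_eq_norm
  rw [Real.norm_eq_abs] at hm
  have hs : HasSum (fun i => t i • T (u (φ i))) (T (hw.synthesis t)) := by
    simpa using (hw.hasSum_synthesis t).mapL T
  have hlow := abs_mul_sub_le_abs_apply_of_hasSum hs (G m) (hdiag m) (hoff m)
    fun i => hm ▸ t.norm_apply_le i
  have hup : |G m (T (hw.synthesis t))| ≤ 2 * ‖T (hw.synthesis t)‖ := by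
    rw [← Real.norm_eq_abs]
    exact ((G m).le_opNorm _).trans (by gcongr; exact hG m)
  have hrε : r - (r - δ) / 3 - 2 * ((r - δ) / 3) = δ := by ring
  rw [hm, hrε] at hlow
  rw [div_mul_eq_mul_div, le_div_iff₀ hδ0]
  linarith

theorem exists_factorization_of_le_mul_norm {𝕜 E X Y : Type*} [NontriviallyNormedField 𝕜]
    [NormedAddCommGroup E] [NormedSpace 𝕜 E] [CompleteSpace E] [NormedAddCommGroup X]
    [NormedSpace 𝕜 X] [NormedAddCommGroup Y] [NormedSpace 𝕜 Y] (T : X →L[𝕜] Y) (U : E →L[𝕜] X)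
    (hU : ‖U‖ ≤ 1) {C : ℝ} (hC : 0 ≤ C) (hlow : ∀ t, ‖t‖ ≤ C * ‖T (U t)‖) :
    ∃ (X₀ : Submodule 𝕜 X) (U₀ : E ≃L[𝕜] X₀) (V : (X₀.map (T : X →ₗ[𝕜] Y)) ≃L[𝕜] E),
      IsClosed (X₀ : Set X) ∧
      (∀ x : X₀, (U₀ (V ⟨T x, Submodule.mem_map_of_mem x.2⟩) : X) = (x : X)) ∧
      ‖(U₀ : E →L[𝕜] X₀)‖ ≤ 1 ∧ ‖(V : (X₀.map (T : X →ₗ[𝕜] Y)) →L[𝕜] E)‖ ≤ C := by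
  have hUlow : ∀ t, ‖t‖ ≤ C * ‖T‖ * ‖U t‖ := fun t => by
    rw [mul_assoc]
    exact (hlow t).trans (by gcongr; exact T.le_opNorm _)
  have hinj : Function.Injective (T.comp U) :=
    (injective_iff_map_eq_zero (T.comp U)).2 fun t ht =>
      norm_le_zero_iff.1 (by simpa [show T (U t) = 0 from ht] using hlow t)
  set X₀ := LinearMap.range (U : E →ₗ[𝕜] X)
  have hX₀ : IsClosed (X₀ : Set X) :=
    (U.antilipschitz_of_bound (K := ⟨C * ‖T‖, by positivity⟩) hUlow).isClosed_range
      U.uniformContinuous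
  let U₀ : E ≃ₗ[𝕜] X₀ :=
    LinearEquiv.ofInjective (U : E →ₗ[𝕜] X) (show Function.Injective (T ∘ U) from hinj).of_comp
  let S : E →ₗ[𝕜] X₀.map (T : X →ₗ[𝕜] Y) :=
    (T.comp U : E →ₗ[𝕜] Y).codRestrict _ fun t => Submodule.mem_map_of_mem ⟨t, rfl⟩
  have hS : Function.Bijective S := by
    refine ⟨fun s t h => hinj (congrArg Subtype.val h), ?_⟩
    rintro ⟨_, _, ⟨t, rfl⟩, rfl⟩
    exact ⟨t, rfl⟩
  let S' := LinearEquiv.ofBijective S hS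
  have hU₀ : ∀ t, ‖U₀ t‖ ≤ 1 * ‖t‖ := U.le_of_opNorm_le hU
  have hU₀_symm : ∀ x, ‖U₀.symm x‖ ≤ C * ‖T‖ * ‖x‖ := fun x => by
    have hx : ‖U (U₀.symm x)‖ = ‖x‖ :=
      congrArg (‖·‖) (congrArg Subtype.val (U₀.apply_symm_apply x))
    exact hx ▸ hUlow (U₀.symm x)
  have hS'_symm : ∀ y, ‖S'.symm y‖ ≤ C * ‖y‖ := fun y => by
    have hy : ‖T (U (S'.symm y))‖ = ‖y‖ :=
      congrArg (‖·‖) (congrArg Subtype.val (S'.apply_symm_apply y))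
    exact hy ▸ hlow (S'.symm y)
  refine ⟨X₀, U₀.toContinuousLinearEquivOfBounds 1 (C * ‖T‖) hU₀ hU₀_symm,
    (S'.toContinuousLinearEquivOfBounds ‖T.comp U‖ C (T.comp U).le_opNorm hS'_symm).symm,
    hX₀, ?_, ContinuousLinearMap.opNorm_le_bound _ zero_le_one hU₀,
    ContinuousLinearMap.opNorm_le_bound _ hC hS'_symm⟩
  rintro ⟨_, t, rfl⟩
  have ht : S'.symm ⟨T (U t), Submodule.mem_map_of_mem ⟨t, rfl⟩⟩ = t := S'.symm_apply_eq.2 rfl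
  exact congrArg (fun s => U s) ht

theorem statement5_general {X Y : Type*} [NormedAddCommGroup X] [NormedSpace ℝ X] [CompleteSpace X]
    [NormedAddCommGroup Y] [NormedSpace ℝ Y] (T : X →L[ℝ] Y)
    (δ : ℝ) (hδ0 : 0 < δ) (hδ : δ < ucQ ℝ T) :
    ∃ (X₀ : Submodule ℝ X) (U : C₀(ℕ, ℝ) ≃L[ℝ] X₀)
      (V : (X₀.map (T : X →ₗ[ℝ] Y)) ≃L[ℝ] C₀(ℕ, ℝ)),
      IsClosed (X₀ : Set X) ∧
      (∀ x : X₀, (U (V ⟨T x, Submodule.mem_map_of_mem x.2⟩) : X) = (x : X)) ∧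
      ‖(U : C₀(ℕ, ℝ) →L[ℝ] X₀)‖ ≤ 1 ∧
      ‖(V : (X₀.map (T : X →ₗ[ℝ] Y)) →L[ℝ] C₀(ℕ, ℝ))‖ ≤ 2 / δ := by
  obtain ⟨U, hU, hlow⟩ := exists_c₀_map_bounded_below_of_lt_ucQ T hδ0 hδ
  exact exists_factorization_of_le_mul_norm T U hU (by positivity) hlow

/-- if `0 < δ < uc(T)`, then `T` fixes a copy of `c₀` in a quantitatively
nice way: `(T|_{X₀})⁻¹ = U ∘ V` with `‖U‖ ≤ 1` and `‖V‖ ≤ 2/δ`. -/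
theorem statement5 {X Y : Type*} [NormedAddCommGroup X] [NormedSpace ℝ X] [CompleteSpace X]
    [NormedAddCommGroup Y] [NormedSpace ℝ Y] [CompleteSpace Y] (T : X →L[ℝ] Y)
    (δ : ℝ) (hδ0 : 0 < δ) (hδ : δ < ucQ ℝ T) :
    ∃ (X₀ : Submodule ℝ X) (U : C₀(ℕ, ℝ) ≃L[ℝ] X₀)
      (V : (X₀.map (T : X →ₗ[ℝ] Y)) ≃L[ℝ] C₀(ℕ, ℝ)),
      IsClosed (X₀ : Set X) ∧
      (∀ x : X₀, (U (V ⟨T x, Submodule.mem_map_of_mem x.2⟩) : X) = (x : X)) ∧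
      ‖(U : C₀(ℕ, ℝ) →L[ℝ] X₀)‖ ≤ 1 ∧
      ‖(V : (X₀.map (T : X →ₗ[ℝ] Y)) →L[ℝ] C₀(ℕ, ℝ))‖ ≤ 2 / δ :=
  statement5_general T δ hδ0 hδ
end

section
/- Let $X$ be a Banach space and $C > 0$. The following are equivalent: (a) for every Banach space $Y$ and every bounded operator $T : X \to Y$, $\gamma(T^*) \le C \cdot \operatorname{uc}(T)$; (b) the same inequality holds for every bounded operator $T : X \to \ell^\infty$; (c) for every bounded set $K \subset X^*$, $\gamma(K) \le C \cdot \eta(K)$. -/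
open Filter Topology ZeroAtInfty Metric

section AuxProofs

open Filter Finset

variable {X : Type} [NormedAddCommGroup X] [NormedSpace ℝ X]

lemma UnitWUC.sum_norm_le' {x : ℕ → X} (hx : UnitWUC ℝ x) (f : StrongDual ℝ X) (N : ℕ) :
    ∑ i ∈ Finset.range N, ‖f (x i)‖ ≤ ‖f‖ := by
  rcases eq_or_ne f 0 with rfl | hf
  · simp
  · have hpos : 0 < ‖f‖ := norm_pos_iff.mpr hf
    have h1 : ‖(‖f‖⁻¹ • f : StrongDual ℝ X)‖ ≤ 1 := by
      rw [norm_smul, norm_inv, norm_norm, inv_mul_cancel₀ hpos.ne']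
    have h2 := hx (‖f‖⁻¹ • f) h1 N
    have heq : ∀ i, ‖(‖f‖⁻¹ • f) (x i)‖ = ‖f‖⁻¹ * ‖f (x i)‖ := by
      intro i
      simp [ContinuousLinearMap.smul_apply, norm_smul, abs_of_nonneg (inv_nonneg.mpr hpos.le)]
    rw [Finset.sum_congr rfl (fun i _ => heq i), ← Finset.mul_sum] at h2
    calc ∑ i ∈ Finset.range N, ‖f (x i)‖
        = ‖f‖ * (‖f‖⁻¹ * ∑ i ∈ Finset.range N, ‖f (x i)‖) := by
          field_simp
      _ ≤ ‖f‖ * 1 := mul_le_mul_of_nonneg_left h2 hpos.le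
      _ = ‖f‖ := mul_one _

lemma UnitWUC.norm_partial_sum_le' {x : ℕ → X} (hx : UnitWUC ℝ x) (N : ℕ) :
    ‖∑ i ∈ Finset.range N, x i‖ ≤ 1 := by
  apply NormedSpace.norm_le_dual_bound ℝ _ zero_le_one
  intro f
  calc ‖f (∑ i ∈ Finset.range N, x i)‖ = ‖∑ i ∈ Finset.range N, f (x i)‖ := by rw [map_sum]
    _ ≤ ∑ i ∈ Finset.range N, ‖f (x i)‖ := norm_sum_le _ _
    _ ≤ ‖f‖ := hx.sum_norm_le' f N
    _ = 1 * ‖f‖ := (one_mul _).symm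

lemma UnitWUC.norm_le_one' {x : ℕ → X} (hx : UnitWUC ℝ x) (n : ℕ) : ‖x n‖ ≤ 1 := by
  apply NormedSpace.norm_le_dual_bound ℝ _ zero_le_one
  intro f
  have h1 : ‖f (x n)‖ ≤ ∑ i ∈ Finset.range (n + 1), ‖f (x i)‖ :=
    Finset.single_le_sum (f := fun i => ‖f (x i)‖) (fun i _ => norm_nonneg _)
      (Finset.self_mem_range_succ n)
  calc ‖f (x n)‖ ≤ ∑ i ∈ Finset.range (n + 1), ‖f (x i)‖ := h1
    _ ≤ ‖f‖ := hx.sum_norm_le' f (n + 1)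
    _ = 1 * ‖f‖ := (one_mul _).symm

lemma unitWUC_zero : UnitWUC ℝ (fun _ : ℕ => (0 : X)) := by
  intro f hf N; simp

-- caQ lemmas
lemma caQ_sSup_nonneg {Y : Type*} [NormedAddCommGroup Y] (y : ℕ → Y) (n : ℕ) :
    0 ≤ sSup { r : ℝ | ∃ k ≥ n, ∃ l ≥ n, r = ‖y k - y l‖ } :=
  Real.sSup_nonneg (by rintro r ⟨k, _, l, _, rfl⟩; positivity)

lemma caQ_nonneg {Y : Type*} [NormedAddCommGroup Y] (y : ℕ → Y) : 0 ≤ caQ y :=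
  Real.iInf_nonneg (caQ_sSup_nonneg y)

lemma caQ_le_sSup {Y : Type*} [NormedAddCommGroup Y] (y : ℕ → Y) (n : ℕ) :
    caQ y ≤ sSup { r : ℝ | ∃ k ≥ n, ∃ l ≥ n, r = ‖y k - y l‖ } :=
  ciInf_le ⟨0, by rintro r ⟨m, rfl⟩; exact caQ_sSup_nonneg y m⟩ n

lemma caQ_le_of_forall {Y : Type*} [NormedAddCommGroup Y] {y : ℕ → Y} {c : ℝ} (hc : 0 ≤ c)
    (h : ∀ k l, ‖y k - y l‖ ≤ c) : caQ y ≤ c :=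
  (caQ_le_sSup y 0).trans (Real.sSup_le (by rintro r ⟨k, _, l, _, rfl⟩; exact h k l) hc)

lemma caQ_zero' {Y : Type*} [NormedAddCommGroup Y] : caQ (fun _ : ℕ => (0 : Y)) = 0 :=
  le_antisymm (caQ_le_of_forall le_rfl (by simp)) (caQ_nonneg _)

-- sig lemmas
lemma sig_nonneg (K : Set (StrongDual ℝ X)) (z : X) :
    0 ≤ sSup { r : ℝ | ∃ f ∈ K, r = ‖f z‖ } :=
  Real.sSup_nonneg (by rintro r ⟨f, _, rfl⟩; positivity)

lemma sig_le {K : Set (StrongDual ℝ X)} {M : ℝ} (hK : ∀ f ∈ K, ‖f‖ ≤ M) (hM : 0 ≤ M)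
    (z : X) : sSup { r : ℝ | ∃ f ∈ K, r = ‖f z‖ } ≤ M * ‖z‖ := by
  apply Real.sSup_le _ (by positivity)
  rintro r ⟨f, hf, rfl⟩
  exact (f.le_opNorm z).trans (mul_le_mul_of_nonneg_right (hK f hf) (norm_nonneg z))

lemma sig_bddAbove {K : Set (StrongDual ℝ X)} {M : ℝ} (hK : ∀ f ∈ K, ‖f‖ ≤ M)
    (z : X) : BddAbove { r : ℝ | ∃ f ∈ K, r = ‖f z‖ } := by
  refine ⟨M * ‖z‖, ?_⟩
  rintro r ⟨f, hf, rfl⟩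
  exact (f.le_opNorm z).trans (mul_le_mul_of_nonneg_right (hK f hf) (norm_nonneg z))

lemma le_sig {K : Set (StrongDual ℝ X)} {M : ℝ} (hK : ∀ f ∈ K, ‖f‖ ≤ M)
    {f : StrongDual ℝ X} (hf : f ∈ K) (z : X) :
    ‖f z‖ ≤ sSup { r : ℝ | ∃ f ∈ K, r = ‖f z‖ } :=
  le_csSup (sig_bddAbove hK z) ⟨f, hf, rfl⟩

-- interval-sum chain lemma
lemma sum_Ico_chain {t : ℕ → ℝ} (ht : ∀ i, 0 ≤ t i) {a b : ℕ → ℕ} (hab : ∀ j, a j ≤ b j)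
    (hba : ∀ j, b j ≤ a (j + 1)) :
    ∀ N, ∑ j ∈ Finset.range N, ∑ i ∈ Finset.Ico (a j) (b j), t i ≤
      ∑ i ∈ Finset.range (a N), t i := by
  intro N
  induction N with
  | zero => simpa using Finset.sum_nonneg fun i _ => ht i
  | succ N ih =>
    rw [Finset.sum_range_succ]
    have h3 : ∑ i ∈ Finset.range (a N), t i + ∑ i ∈ Finset.Ico (a N) (b N), t i
        = ∑ i ∈ Finset.range (b N), t i := Finset.sum_range_add_sum_Ico t (hab N)
    have h4 : ∑ i ∈ Finset.range (b N), t i ≤ ∑ i ∈ Finset.range (a (N + 1)), t i :=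
      Finset.sum_le_sum_of_subset_of_nonneg
        (Finset.range_subset_range.mpr (hba N)) (fun i _ _ => ht i)
    linarith

-- gammaM element bound
lemma gamma_elem_le {Z : Type*} [NormedAddCommGroup Z] [NormedSpace ℝ Z] {A : Set Z} {R : ℝ}
    (hA : ∀ a ∈ A, ‖a‖ ≤ R) {c : ℝ}
    (hc : c ∈ { c | ∃ (a : ℕ → Z) (f : ℕ → StrongDual ℝ Z) (g h : ℕ → ℝ) (l₁ l₂ : ℝ),
      (∀ n, a n ∈ A) ∧ (∀ m, ‖f m‖ ≤ 1) ∧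
      (∀ n, Tendsto (fun m => f m (a n)) atTop (𝓝 (g n))) ∧ Tendsto g atTop (𝓝 l₁) ∧
      (∀ m, Tendsto (fun n => f m (a n)) atTop (𝓝 (h m))) ∧ Tendsto h atTop (𝓝 l₂) ∧
      c = ‖l₁ - l₂‖ }) : c ≤ 2 * R := by
  obtain ⟨a, f, g, h', l₁, l₂, ha, hf, hg, hgl, hh, hhl, rfl⟩ := hc
  have hb : ∀ n m, ‖f m (a n)‖ ≤ R := by
    intro n m
    calc ‖f m (a n)‖ ≤ ‖f m‖ * ‖a n‖ := (f m).le_opNorm (a n)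
      _ ≤ 1 * R := mul_le_mul (hf m) (hA _ (ha n)) (norm_nonneg _) zero_le_one
      _ = R := one_mul _
  have hgb : ∀ n, ‖g n‖ ≤ R := fun n =>
    le_of_tendsto (hg n).norm (Eventually.of_forall (hb n))
  have hhb : ∀ m, ‖h' m‖ ≤ R := fun m =>
    le_of_tendsto (hh m).norm (Eventually.of_forall (fun n => hb n m))
  have hl₁ : ‖l₁‖ ≤ R := le_of_tendsto hgl.norm (Eventually.of_forall hgb)
  have hl₂ : ‖l₂‖ ≤ R := le_of_tendsto hhl.norm (Eventually.of_forall hhb)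
  calc ‖l₁ - l₂‖ ≤ ‖l₁‖ + ‖l₂‖ := norm_sub_le _ _
    _ ≤ 2 * R := by linarith

lemma dualBallImage_norm_le {Y : Type} [NormedAddCommGroup Y] [NormedSpace ℝ Y]
    (T : X →L[ℝ] Y) : ∀ g ∈ dualBallImage ℝ T, ‖g‖ ≤ ‖T‖ := by
  rintro g ⟨f, hf, rfl⟩
  calc ‖f.comp T‖ ≤ ‖f‖ * ‖T‖ := f.opNorm_comp_le T
    _ ≤ 1 * ‖T‖ := mul_le_mul_of_nonneg_right hf (norm_nonneg T)
    _ = ‖T‖ := one_mul _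

-- ucQ lemmas
lemma partial_sum_T_le {Y : Type} [NormedAddCommGroup Y] [NormedSpace ℝ Y]
    {x : ℕ → X} (hx : UnitWUC ℝ x) (T : X →L[ℝ] Y) (N : ℕ) :
    ‖∑ i ∈ Finset.range N, T (x i)‖ ≤ ‖T‖ := by
  rw [← map_sum]
  calc ‖T (∑ i ∈ Finset.range N, x i)‖ ≤ ‖T‖ * ‖∑ i ∈ Finset.range N, x i‖ := T.le_opNorm _
    _ ≤ ‖T‖ * 1 := mul_le_mul_of_nonneg_left (hx.norm_partial_sum_le' N) (norm_nonneg T)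
    _ = ‖T‖ := mul_one _

lemma ucQ_elem_le {Y : Type} [NormedAddCommGroup Y] [NormedSpace ℝ Y]
    (T : X →L[ℝ] Y) {c : ℝ}
    (hc : c ∈ { c | ∃ x : ℕ → X, UnitWUC ℝ x ∧
      c = caQ (fun n => ∑ i ∈ Finset.range n, T (x i)) }) : c ≤ 2 * ‖T‖ := by
  obtain ⟨x, hx, rfl⟩ := hc
  apply caQ_le_of_forall (by positivity)
  intro k l
  calc ‖(∑ i ∈ Finset.range k, T (x i)) - ∑ i ∈ Finset.range l, T (x i)‖
      ≤ ‖∑ i ∈ Finset.range k, T (x i)‖ + ‖∑ i ∈ Finset.range l, T (x i)‖ := norm_sub_le _ _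
    _ ≤ ‖T‖ + ‖T‖ := add_le_add (partial_sum_T_le hx T k) (partial_sum_T_le hx T l)
    _ = 2 * ‖T‖ := by ring

lemma ucQ_bddAbove {Y : Type} [NormedAddCommGroup Y] [NormedSpace ℝ Y] (T : X →L[ℝ] Y) :
    BddAbove { c | ∃ x : ℕ → X, UnitWUC ℝ x ∧
      c = caQ (fun n => ∑ i ∈ Finset.range n, T (x i)) } :=
  ⟨2 * ‖T‖, fun _ hc => ucQ_elem_le T hc⟩

lemma ucQ_nonneg {Y : Type} [NormedAddCommGroup Y] [NormedSpace ℝ Y] (T : X →L[ℝ] Y) :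
    0 ≤ ucQ ℝ T := by
  apply le_csSup (ucQ_bddAbove T)
  refine ⟨fun _ => 0, unitWUC_zero, ?_⟩
  rw [show (fun n => ∑ i ∈ Finset.range n, T (0 : X)) = fun _ : ℕ => (0 : Y) by
    funext n; simp, caQ_zero']

-- etaM lemmas
lemma etaM_elem_le {K : Set (StrongDual ℝ X)} {M : ℝ} (hK : ∀ f ∈ K, ‖f‖ ≤ M)
    (hM : 0 ≤ M) {c : ℝ}
    (hc : c ∈ { c | ∃ x : ℕ → X, UnitWUC ℝ x ∧
      c = Filter.limsup (fun n => sSup { r : ℝ | ∃ f ∈ K, r = ‖f (x n)‖ }) atTop }) :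
    c ≤ M := by
  obtain ⟨x, hx, rfl⟩ := hc
  apply Filter.limsup_le_of_le (Filter.isCoboundedUnder_le_of_le atTop fun n => sig_nonneg K (x n))
  apply Eventually.of_forall
  intro n
  calc sSup { r : ℝ | ∃ f ∈ K, r = ‖f (x n)‖ } ≤ M * ‖x n‖ := sig_le hK hM (x n)
    _ ≤ M * 1 := mul_le_mul_of_nonneg_left (hx.norm_le_one' n) hM
    _ = M := mul_one _

lemma etaM_bddAbove {K : Set (StrongDual ℝ X)} {M : ℝ} (hK : ∀ f ∈ K, ‖f‖ ≤ M)
    (hM : 0 ≤ M) :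
    BddAbove { c | ∃ x : ℕ → X, UnitWUC ℝ x ∧
      c = Filter.limsup (fun n => sSup { r : ℝ | ∃ f ∈ K, r = ‖f (x n)‖ }) atTop } :=
  ⟨M, fun _ hc => etaM_elem_le hK hM hc⟩

lemma etaM_nonneg {K : Set (StrongDual ℝ X)} {M : ℝ} (hK : ∀ f ∈ K, ‖f‖ ≤ M)
    (hM : 0 ≤ M) : 0 ≤ etaM ℝ K := by
  apply le_csSup (etaM_bddAbove hK hM)
  refine ⟨fun _ => (0 : X), unitWUC_zero, ?_⟩
  have h1 : (fun n : ℕ => sSup { r : ℝ | ∃ f ∈ K, r = ‖f ((fun _ : ℕ => (0 : X)) n)‖ })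
      = fun _ : ℕ => (0 : ℝ) := by
    funext n
    refine le_antisymm (Real.sSup_le ?_ le_rfl) (sig_nonneg K 0)
    rintro r ⟨f, _, rfl⟩
    simp
  rw [h1, limsup_const]

end AuxProofs

section KeyLemmas

open Filter Finset

variable {X : Type} [NormedAddCommGroup X] [NormedSpace ℝ X]

lemma keyA {C : ℝ} (hC : 0 < C)
    (hc : ∀ K : Set (StrongDual ℝ X), Bornology.IsBounded K →
      gammaM ℝ K ≤ C * etaM ℝ K)
    (Y : Type) [NormedAddCommGroup Y] [NormedSpace ℝ Y] (T : X →L[ℝ] Y) :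
    gammaM ℝ (dualBallImage ℝ T) ≤ C * ucQ ℝ T := by
  have hbdd : Bornology.IsBounded (dualBallImage ℝ T) :=
    (isBounded_iff_forall_norm_le).mpr ⟨‖T‖, dualBallImage_norm_le T⟩
  refine (hc _ hbdd).trans (mul_le_mul_of_nonneg_left ?_ hC.le)
  rw [etaM]
  apply Real.sSup_le _ (ucQ_nonneg T)
  rintro c ⟨x, hx, rfl⟩
  have h1 : ∀ n : ℕ, sSup { r : ℝ | ∃ g ∈ dualBallImage ℝ T, r = ‖g (x n)‖ } ≤ ‖T (x n)‖ := by
    intro n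
    apply Real.sSup_le _ (norm_nonneg _)
    rintro r ⟨g, ⟨f, hf, rfl⟩, rfl⟩
    show ‖f.comp T (x n)‖ ≤ _
    calc ‖f (T (x n))‖ ≤ ‖f‖ * ‖T (x n)‖ := f.le_opNorm _
      _ ≤ 1 * ‖T (x n)‖ := mul_le_mul_of_nonneg_right hf (norm_nonneg _)
      _ = ‖T (x n)‖ := one_mul _
  have h2 : limsup (fun n => sSup { r : ℝ | ∃ g ∈ dualBallImage ℝ T, r = ‖g (x n)‖ }) atTop
      ≤ limsup (fun n => ‖T (x n)‖) atTop := by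
    refine limsup_le_limsup (Eventually.of_forall h1)
      (Filter.isCoboundedUnder_le_of_le atTop fun n => sig_nonneg _ _)
      (isBoundedUnder_of ⟨‖T‖, fun n => ?_⟩)
    calc ‖T (x n)‖ ≤ ‖T‖ * ‖x n‖ := T.le_opNorm _
      _ ≤ ‖T‖ * 1 := mul_le_mul_of_nonneg_left (hx.norm_le_one' n) (norm_nonneg T)
      _ = ‖T‖ := mul_one _
  have h3 : limsup (fun n => ‖T (x n)‖) atTop
      ≤ caQ (fun n => ∑ i ∈ Finset.range n, T (x i)) := by
    apply le_ciInf
    intro n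
    apply limsup_le_of_le (Filter.isCoboundedUnder_le_of_le atTop fun m => norm_nonneg _)
    filter_upwards [eventually_ge_atTop n] with m hm
    have hmem : ‖T (x m)‖ ∈ { r : ℝ | ∃ k ≥ n, ∃ l ≥ n,
        r = ‖(∑ i ∈ Finset.range k, T (x i)) - ∑ i ∈ Finset.range l, T (x i)‖ } := by
      refine ⟨m + 1, by omega, m, hm, ?_⟩
      rw [Finset.sum_range_succ]
      simp
    refine le_csSup ⟨2 * ‖T‖, ?_⟩ hmem
    rintro r ⟨k, _, l, _, rfl⟩
    calc ‖(∑ i ∈ Finset.range k, T (x i)) - ∑ i ∈ Finset.range l, T (x i)‖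
        ≤ ‖∑ i ∈ Finset.range k, T (x i)‖ + ‖∑ i ∈ Finset.range l, T (x i)‖ := norm_sub_le _ _
      _ ≤ ‖T‖ + ‖T‖ := add_le_add (partial_sum_T_le hx T k) (partial_sum_T_le hx T l)
      _ = 2 * ‖T‖ := by ring
  have h4 : caQ (fun n => ∑ i ∈ Finset.range n, T (x i)) ≤ ucQ ℝ T :=
    le_csSup (ucQ_bddAbove T) ⟨x, hx, rfl⟩
  exact h2.trans (h3.trans h4)

end KeyLemmas

set_option maxHeartbeats 2000000 in
set_option synthInstance.maxHeartbeats 1000000 in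
lemma keyC {X : Type} [NormedAddCommGroup X] [NormedSpace ℝ X] {C : ℝ} (hC : 0 < C)
    (hb : ∀ T : X →L[ℝ] lp (fun _ : ℕ => ℝ) ⊤,
      gammaM ℝ (dualBallImage ℝ T) ≤ C * ucQ ℝ T)
    (K : Set (StrongDual ℝ X)) (hK : Bornology.IsBounded K) :
    gammaM ℝ K ≤ C * etaM ℝ K := by
  classical
  obtain ⟨M₀, hM₀⟩ := (isBounded_iff_forall_norm_le).mp hK
  set M : ℝ := max M₀ 1 with hMdef
  have hM1 : (1 : ℝ) ≤ M := le_max_right _ _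
  have hMpos : (0 : ℝ) < M := lt_of_lt_of_le one_pos hM1
  have hKM : ∀ f ∈ K, ‖f‖ ≤ M := fun f hf => (hM₀ f hf).trans (le_max_left _ _)
  have heta0 : 0 ≤ etaM ℝ K := etaM_nonneg hKM hMpos.le
  rw [gammaM]
  apply Real.sSup_le _ (mul_nonneg hC.le heta0)
  rintro c ⟨a, f, g, g', l₁, l₂, ha, hf, hg, hgl, hh, hhl, rfl⟩
  have haM : ∀ n, ‖a n‖ ≤ M := fun n => hKM _ (ha n)
  -- bound on components
  have hcoordbd : ∀ (z : X) (n : ℕ), ‖M⁻¹ * a n z‖ ≤ ‖z‖ := by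
    intro z n
    rw [norm_mul, norm_inv, Real.norm_of_nonneg hMpos.le]
    have h1 : ‖a n z‖ ≤ M * ‖z‖ :=
      ((a n).le_opNorm z).trans (mul_le_mul_of_nonneg_right (haM n) (norm_nonneg z))
    calc M⁻¹ * ‖a n z‖ ≤ M⁻¹ * (M * ‖z‖) :=
          mul_le_mul_of_nonneg_left h1 (inv_nonneg.mpr hMpos.le)
      _ = ‖z‖ := by field_simp
  -- the operator T : X → ℓ∞
  have hmem : ∀ z : X, Memℓp (fun n => M⁻¹ * a n z) ⊤ := by
    intro z
    apply memℓp_infty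
    refine ⟨‖z‖, ?_⟩
    rintro r ⟨n, rfl⟩
    exact hcoordbd z n
  let Tlin : X →ₗ[ℝ] lp (fun _ : ℕ => ℝ) ⊤ :=
    { toFun := fun z => ⟨fun n => M⁻¹ * a n z, hmem z⟩
      map_add' := fun z w => by
        apply lp.ext
        funext n
        show M⁻¹ * a n (z + w) = M⁻¹ * a n z + M⁻¹ * a n w
        rw [map_add]; ring
      map_smul' := fun c z => by
        apply lp.ext
        funext n
        show M⁻¹ * a n (c • z) = c * (M⁻¹ * a n z)
        rw [map_smul]; simp [smul_eq_mul]; ring }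
  have hTnorm : ∀ z, ‖Tlin z‖ ≤ 1 * ‖z‖ := by
    intro z
    rw [one_mul]
    apply lp.norm_le_of_forall_le (norm_nonneg z)
    intro n
    exact hcoordbd z n
  let T : X →L[ℝ] lp (fun _ : ℕ => ℝ) ⊤ := Tlin.mkContinuous 1 hTnorm
  have hTz : ∀ (z : X) (n : ℕ), (T z : ∀ _ : ℕ, ℝ) n = M⁻¹ * a n z := fun _ _ => rfl
  -- coordinate functionals
  have ecoord : ∀ n : ℕ, ∃ e : StrongDual ℝ (lp (fun _ : ℕ => ℝ) ⊤),
      ‖e‖ ≤ 1 ∧ ∀ v, e v = (v : ∀ _ : ℕ, ℝ) n := by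
    intro n
    refine ⟨LinearMap.mkContinuous
      { toFun := fun v : lp (fun _ : ℕ => ℝ) ⊤ => (v : ∀ _ : ℕ, ℝ) n
        map_add' := fun v w => rfl
        map_smul' := fun c v => rfl } 1 (fun v => by
          have := lp.norm_apply_le_norm (E := fun _ : ℕ => ℝ) (ENNReal.top_ne_zero) v n
          exact this.trans (le_of_eq (one_mul _).symm)), ?_, fun v => rfl⟩
    exact LinearMap.mkContinuous_norm_le _ zero_le_one _
  choose e he1 he2 using ecoord
  -- relation between T and sig
  have hsig : ∀ z : X, M * ‖T z‖ ≤ sSup { r : ℝ | ∃ f ∈ K, r = ‖f z‖ } := by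
    intro z
    have h1 : ‖T z‖ ≤ M⁻¹ * sSup { r : ℝ | ∃ f ∈ K, r = ‖f z‖ } := by
      apply lp.norm_le_of_forall_le
        (mul_nonneg (inv_nonneg.mpr hMpos.le) (sig_nonneg K z))
      intro n
      rw [hTz z n, norm_mul, norm_inv, Real.norm_of_nonneg hMpos.le]
      exact mul_le_mul_of_nonneg_left (le_sig hKM (ha n) z) (inv_nonneg.mpr hMpos.le)
    calc M * ‖T z‖ ≤ M * (M⁻¹ * sSup { r : ℝ | ∃ f ∈ K, r = ‖f z‖ }) :=
          mul_le_mul_of_nonneg_left h1 hMpos.le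
      _ = sSup { r : ℝ | ∃ f ∈ K, r = ‖f z‖ } := by field_simp
  -- Step 1 : M⁻¹ * ‖l₁ - l₂‖ ≤ gammaM (dualBallImage T)
  have hcomp : ∀ n : ℕ, (e n).comp T = M⁻¹ • a n := by
    intro n
    ext z
    show e n (T z) = (M⁻¹ • a n) z
    rw [he2 n (T z), hTz z n]
    simp [smul_eq_mul]
  have hgammaBdd : BddAbove { c | ∃ (a : ℕ → StrongDual ℝ X)
      (f : ℕ → StrongDual ℝ (StrongDual ℝ X)) (g h : ℕ → ℝ) (l₁ l₂ : ℝ),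
      (∀ n, a n ∈ dualBallImage ℝ T) ∧ (∀ m, ‖f m‖ ≤ 1) ∧
      (∀ n, Filter.Tendsto (fun m => f m (a n)) Filter.atTop (nhds (g n))) ∧
        Filter.Tendsto g Filter.atTop (nhds l₁) ∧
      (∀ m, Filter.Tendsto (fun n => f m (a n)) Filter.atTop (nhds (h m))) ∧
        Filter.Tendsto h Filter.atTop (nhds l₂) ∧
      c = ‖l₁ - l₂‖ } :=
    ⟨2 * ‖T‖, fun _ hc => gamma_elem_le (dualBallImage_norm_le T) hc⟩
  have hmem1 : M⁻¹ * ‖l₁ - l₂‖ ≤ gammaM ℝ (dualBallImage ℝ T) := by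
    apply le_csSup hgammaBdd
    refine ⟨fun n => M⁻¹ • a n, f, fun n => M⁻¹ * g n, fun m => M⁻¹ * g' m,
      M⁻¹ * l₁, M⁻¹ * l₂, fun n => ⟨e n, he1 n, (hcomp n).symm⟩, hf, ?_, ?_, ?_, ?_, ?_⟩
    · intro n
      have heq : (fun m => f m (M⁻¹ • a n)) = fun m => M⁻¹ * f m (a n) := by
        funext m
        rw [map_smul, smul_eq_mul]
      rw [heq]
      exact (hg n).const_mul _
    · exact hgl.const_mul _
    · intro m
      have heq : (fun n => f m (M⁻¹ • a n)) = fun n => M⁻¹ * f m (a n) := by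
        funext n
        rw [map_smul, smul_eq_mul]
      rw [heq]
      exact (hh m).const_mul _
    · exact hhl.const_mul _
    · rw [← mul_sub, norm_mul, norm_inv, Real.norm_of_nonneg hMpos.le]
  -- Step 2 : ucQ T ≤ M⁻¹ * etaM K
  have step2 : ucQ ℝ T ≤ M⁻¹ * etaM ℝ K := by
    rw [ucQ]
    apply Real.sSup_le _ (mul_nonneg (inv_nonneg.mpr hMpos.le) heta0)
    rintro u ⟨x, hx, rfl⟩
    set S : ℕ → lp (fun _ : ℕ => ℝ) ⊤ := fun n => ∑ i ∈ Finset.range n, T (x i) with hSdef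
    suffices h : M * caQ S ≤ etaM ℝ K by
      calc caQ S = M⁻¹ * (M * caQ S) := by field_simp
        _ ≤ M⁻¹ * etaM ℝ K := mul_le_mul_of_nonneg_left h (inv_nonneg.mpr hMpos.le)
    have main : ∀ δ : ℝ, 0 < δ → M * caQ S ≤ etaM ℝ K + δ := by
      intro δ hδ
      set ε : ℝ := δ / M with hε
      have hεpos : 0 < ε := div_pos hδ hMpos
      have hMε : M * ε = δ := by
        rw [hε]; field_simp
      by_cases hce : caQ S ≤ ε
      · have h1 : M * caQ S ≤ M * ε := mul_le_mul_of_nonneg_left hce hMpos.le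
        linarith
      push_neg at hce
      have hex : ∀ n : ℕ, ∃ kl : ℕ × ℕ, n ≤ kl.1 ∧ n ≤ kl.2 ∧
          caQ S - ε < ‖S kl.1 - S kl.2‖ := by
        intro n
        have h1 : caQ S - ε < sSup { r : ℝ | ∃ k ≥ n, ∃ l ≥ n, r = ‖S k - S l‖ } :=
          lt_of_lt_of_le (by linarith) (caQ_le_sSup S n)
        have hne : { r : ℝ | ∃ k ≥ n, ∃ l ≥ n, r = ‖S k - S l‖ }.Nonempty :=
          ⟨0, n, le_rfl, n, le_rfl, by simp⟩
        obtain ⟨r, hrmem, hr⟩ := exists_lt_of_lt_csSup hne h1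
        obtain ⟨k, hk, l, hl, rfl⟩ := hrmem
        exact ⟨(k, l), hk, hl, hr⟩
      choose P hP1 hP2 hP3 using hex
      let q : ℕ → ℕ × ℕ := fun j => Nat.rec (P 0) (fun _ prev => P (max prev.1 prev.2)) j
      have hqs : ∀ j, q (j + 1) = P (max (q j).1 (q j).2) := fun j => rfl
      set A : ℕ → ℕ := fun j => min (q j).1 (q j).2 with hAdef
      set B : ℕ → ℕ := fun j => max (q j).1 (q j).2 with hBdef
      have hAB : ∀ j, A j ≤ B j := fun j => min_le_max
      have hBA : ∀ j, B j ≤ A (j + 1) := by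
        intro j
        have h1 := hP1 (max (q j).1 (q j).2)
        have h2 := hP2 (max (q j).1 (q j).2)
        have h3 : A (j + 1) = min (q (j + 1)).1 (q (j + 1)).2 := rfl
        rw [h3, hqs j]
        exact le_min h1 h2
      have hnorm : ∀ j, caQ S - ε < ‖S (B j) - S (A j)‖ := by
        intro j
        have h3 : caQ S - ε < ‖S (q j).1 - S (q j).2‖ := by
          cases j with
          | zero => exact hP3 0
          | succ j => rw [show q (j + 1) = P (max (q j).1 (q j).2) from rfl]; exact hP3 _
        rcases le_total (q j).1 (q j).2 with h | h
        · rw [show A j = (q j).1 from min_eq_left h, show B j = (q j).2 from max_eq_right h,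
            norm_sub_rev]
          exact h3
        · rw [show A j = (q j).2 from min_eq_right h, show B j = (q j).1 from max_eq_left h]
          exact h3
      set y : ℕ → X := fun j => (∑ i ∈ Finset.range (B j), x i) - ∑ i ∈ Finset.range (A j), x i
        with hydef
      have hTy : ∀ j, T (y j) = S (B j) - S (A j) := by
        intro j
        show T (_ - _) = _
        rw [map_sub, map_sum, map_sum]
      have hyU : UnitWUC ℝ y := by
        intro φ hφ N
        have h1 : ∀ j, ‖φ (y j)‖ ≤ ∑ i ∈ Finset.Ico (A j) (B j), ‖φ (x i)‖ := by
          intro j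
          have h2 : φ (y j) = ∑ i ∈ Finset.Ico (A j) (B j), φ (x i) := by
            show φ (_ - _) = _
            rw [map_sub, map_sum, map_sum, Finset.sum_Ico_eq_sub _ (hAB j)]
          rw [h2]
          exact norm_sum_le _ _
        calc ∑ j ∈ Finset.range N, ‖φ (y j)‖
            ≤ ∑ j ∈ Finset.range N, ∑ i ∈ Finset.Ico (A j) (B j), ‖φ (x i)‖ :=
              Finset.sum_le_sum fun j _ => h1 j
          _ ≤ ∑ i ∈ Finset.range (A N), ‖φ (x i)‖ :=
              sum_Ico_chain (fun i => norm_nonneg _) hAB hBA N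
          _ ≤ 1 := hx φ hφ (A N)
      have hylb : ∀ j, M * (caQ S - ε) ≤ sSup { r : ℝ | ∃ f ∈ K, r = ‖f (y j)‖ } := by
        intro j
        calc M * (caQ S - ε) ≤ M * ‖T (y j)‖ := by
              apply mul_le_mul_of_nonneg_left _ hMpos.le
              rw [hTy j]
              exact (hnorm j).le
          _ ≤ _ := hsig (y j)
      have hyub : ∀ j, sSup { r : ℝ | ∃ f ∈ K, r = ‖f (y j)‖ } ≤ M * 2 := by
        intro j
        have hy2 : ‖y j‖ ≤ 2 := by
          calc ‖y j‖ ≤ ‖∑ i ∈ Finset.range (B j), x i‖ + ‖∑ i ∈ Finset.range (A j), x i‖ :=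
                norm_sub_le _ _
            _ ≤ 1 + 1 := add_le_add (hx.norm_partial_sum_le' _) (hx.norm_partial_sum_le' _)
            _ = 2 := by norm_num
        calc sSup { r : ℝ | ∃ f ∈ K, r = ‖f (y j)‖ } ≤ M * ‖y j‖ := sig_le hKM hMpos.le (y j)
          _ ≤ M * 2 := mul_le_mul_of_nonneg_left hy2 hMpos.le
      have hL : M * (caQ S - ε) ≤
          Filter.limsup (fun j => sSup { r : ℝ | ∃ f ∈ K, r = ‖f (y j)‖ }) Filter.atTop :=
        Filter.le_limsup_of_frequently_le (Filter.Frequently.of_forall hylb)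
          (Filter.isBoundedUnder_of ⟨M * 2, hyub⟩)
      have hLeta : Filter.limsup (fun j => sSup { r : ℝ | ∃ f ∈ K, r = ‖f (y j)‖ })
          Filter.atTop ≤ etaM ℝ K :=
        le_csSup (etaM_bddAbove hKM hMpos.le) ⟨y, hyU, rfl⟩
      have h5 : M * (caQ S - ε) ≤ etaM ℝ K := hL.trans hLeta
      have h6 : M * caQ S - M * ε ≤ etaM ℝ K := by
        rw [← mul_sub]; exact h5
      linarith
    by_contra hcon
    push_neg at hcon
    have h7 := main ((M * caQ S - etaM ℝ K) / 2) (by linarith)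
    linarith
  -- combine
  have hfinal := hb T
  calc ‖l₁ - l₂‖ = M * (M⁻¹ * ‖l₁ - l₂‖) := by field_simp
    _ ≤ M * gammaM ℝ (dualBallImage ℝ T) := mul_le_mul_of_nonneg_left hmem1 hMpos.le
    _ ≤ M * (C * ucQ ℝ T) := mul_le_mul_of_nonneg_left hfinal hMpos.le
    _ ≤ M * (C * (M⁻¹ * etaM ℝ K)) :=
        mul_le_mul_of_nonneg_left (mul_le_mul_of_nonneg_left step2 hC.le) hMpos.le
    _ = C * etaM ℝ K := by
        rw [show M * (C * (M⁻¹ * etaM ℝ K)) = (M * M⁻¹) * (C * etaM ℝ K) by ring,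
          mul_inv_cancel₀ hMpos.ne', one_mul]

/-- equivalent formulations of the quantitative property (V) through
`γ(T*) ≤ C·uc(T)`: for all Banach spaces `Y`, for `Y = ℓ^∞`, and through subsets of `X*`. -/
theorem statement6 {X : Type} [NormedAddCommGroup X] [NormedSpace ℝ X] [CompleteSpace X]
    (C : ℝ) (hC : 0 < C) :
    ((∀ (Y : Type) [NormedAddCommGroup Y] [NormedSpace ℝ Y] [CompleteSpace Y]
        (T : X →L[ℝ] Y), gammaM ℝ (dualBallImage ℝ T) ≤ C * ucQ ℝ T) ↔
      (∀ T : X →L[ℝ] lp (fun _ : ℕ => ℝ) ⊤,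
        gammaM ℝ (dualBallImage ℝ T) ≤ C * ucQ ℝ T)) ∧
    ((∀ (Y : Type) [NormedAddCommGroup Y] [NormedSpace ℝ Y] [CompleteSpace Y]
        (T : X →L[ℝ] Y), gammaM ℝ (dualBallImage ℝ T) ≤ C * ucQ ℝ T) ↔
      (∀ K : Set (StrongDual ℝ X), Bornology.IsBounded K →
        gammaM ℝ K ≤ C * etaM ℝ K)) := by
  constructor
  · constructor
    · intro h T
      exact h (lp (fun _ : ℕ => ℝ) ⊤) T
    · intro hb Y _ _ _ T
      exact keyA hC (keyC hC hb) Y T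
  · constructor
    · intro h K hK
      exact keyC hC (fun T => h (lp (fun _ : ℕ => ℝ) ⊤) T) K hK
    · intro hc Y _ _ _ T
      exact keyA hC hc Y T
end

section
/- Let $(z_n)$ be a basic sequence in a Banach space $X$ such that $\sum z_n$ is weakly unconditionally Cauchy and $\inf_n \|z_n\| > 0$. Then $(z_n)$ is equivalent to the canonical basis of $c_0$; in particular $\overline{\operatorname{span}}\{z_n\}$ is isomorphic to $c_0$. -/
open Filter Topology ZeroAtInfty Metric

open NormedSpace in
private lemma aux13_bound {X : Type*} [NormedAddCommGroup X] [NormedSpace ℝ X] [CompleteSpace X]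
    (z : ℕ → X) (hwuc : ∀ f : StrongDual ℝ X, Summable fun n => ‖f (z n)‖) :
    ∃ C : ℝ, 0 ≤ C ∧ ∀ (a : ℕ → ℝ) (B : ℝ), (∀ i, |a i| ≤ B) →
      ∀ N, ‖∑ i ∈ Finset.range N, a i • z i‖ ≤ C * B := by
  have hpt : ∀ f : StrongDual ℝ X, ∃ Cf : ℝ, ∀ p : {p : ℕ × (ℕ → ℝ) // ∀ i, |p.2 i| ≤ 1},
      ‖inclusionInDoubleDual ℝ X (∑ i ∈ Finset.range p.1.1, p.1.2 i • z i) f‖ ≤ Cf := by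
    intro f
    refine ⟨∑' n, ‖f (z n)‖, fun p => ?_⟩
    rw [dual_def]
    calc ‖f (∑ i ∈ Finset.range p.1.1, p.1.2 i • z i)‖
        = ‖∑ i ∈ Finset.range p.1.1, p.1.2 i * f (z i)‖ := by rw [map_sum]; simp
      _ ≤ ∑ i ∈ Finset.range p.1.1, ‖p.1.2 i * f (z i)‖ := norm_sum_le _ _
      _ ≤ ∑ i ∈ Finset.range p.1.1, ‖f (z i)‖ := by
          refine Finset.sum_le_sum fun i _ => ?_
          rw [norm_mul]
          exact mul_le_of_le_one_left (norm_nonneg _) (by simpa using p.2 i)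
      _ ≤ ∑' n, ‖f (z n)‖ := Summable.sum_le_tsum _ (fun _ _ => norm_nonneg _) (hwuc f)
  obtain ⟨C', hC'⟩ := banach_steinhaus hpt
  refine ⟨max C' 0, le_max_right _ _, fun a B hab N => ?_⟩
  have hB0 : 0 ≤ B := le_trans (abs_nonneg _) (hab 0)
  rcases eq_or_lt_of_le hB0 with hB | hB
  · have : ∀ i, a i = 0 := fun i => abs_eq_zero.mp (le_antisymm (by rw [hB]; exact hab i) (abs_nonneg _))
    simp only [this, zero_smul, Finset.sum_const_zero, norm_zero]
    exact mul_nonneg (le_max_right _ _) hB0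
  · have hq : ∀ i, |a i / B| ≤ 1 := fun i => by
      rw [abs_div, abs_of_pos hB, div_le_one hB]; exact hab i
    have hnorm : ‖∑ i ∈ Finset.range N, (a i / B) • z i‖ ≤ C' := by
      have h1 := hC' ⟨(N, fun i => a i / B), hq⟩
      have h2 : ‖inclusionInDoubleDual ℝ X (∑ i ∈ Finset.range N, (a i / B) • z i)‖
          = ‖∑ i ∈ Finset.range N, (a i / B) • z i‖ :=
        (inclusionInDoubleDualLi ℝ (E := X)).norm_map _
      rw [← h2]; exact h1
    have heq : ∑ i ∈ Finset.range N, a i • z i = B • ∑ i ∈ Finset.range N, (a i / B) • z i := by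
      rw [Finset.smul_sum]
      refine Finset.sum_congr rfl fun i _ => ?_
      rw [smul_smul, mul_div_cancel₀ _ hB.ne']
    rw [heq, norm_smul, Real.norm_eq_abs, abs_of_pos hB, mul_comm]
    calc ‖∑ i ∈ Finset.range N, (a i / B) • z i‖ * B ≤ C' * B := by
          exact mul_le_mul_of_nonneg_right hnorm hB0
      _ ≤ max C' 0 * B := mul_le_mul_of_nonneg_right (le_max_left _ _) hB0


/-- a basic sequence `(z_n)` (Grünblum criterion) with `∑ z_n` wuC and norms
bounded away from zero is equivalent to the canonical basis of `c₀`; in particular its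
closed span is isomorphic to `c₀`. -/
theorem statement13 {X : Type*} [NormedAddCommGroup X] [NormedSpace ℝ X] [CompleteSpace X]
    (z : ℕ → X)
    (hbasic : ∃ C > (0:ℝ), ∀ (a : ℕ → ℝ) (m n : ℕ), m ≤ n →
      ‖∑ i ∈ Finset.range m, a i • z i‖ ≤ C * ‖∑ i ∈ Finset.range n, a i • z i‖)
    (hwuc : WUC ℝ z) (hinf : ∃ c > (0:ℝ), ∀ n, c ≤ ‖z n‖) :
    (∀ a : ℕ → ℝ,
      (∃ s, Tendsto (fun N => ∑ i ∈ Finset.range N, a i • z i) atTop (𝓝 s)) ↔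
        Tendsto a atTop (𝓝 (0:ℝ))) ∧
    Nonempty ((Submodule.span ℝ (Set.range z)).topologicalClosure ≃L[ℝ] C₀(ℕ, ℝ)) := by
  obtain ⟨Cb, hCb0, hG⟩ := hbasic
  obtain ⟨c, hc0, hcz⟩ := hinf
  obtain ⟨C, hC0, hC⟩ := aux13_bound z hwuc
  -- forward: convergence of series implies a → 0
  have back : ∀ (a : ℕ → ℝ) (s : X),
      Tendsto (fun N => ∑ i ∈ Finset.range N, a i • z i) atTop (𝓝 s) →
      Tendsto a atTop (𝓝 0) := by
    intro a s hs
    have h1 : Tendsto (fun N => (∑ i ∈ Finset.range (N + 1), a i • z i) -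
        ∑ i ∈ Finset.range N, a i • z i) atTop (𝓝 (s - s)) :=
      (hs.comp (tendsto_add_atTop_nat 1)).sub hs
    rw [sub_self] at h1
    simp only [Finset.sum_range_succ, add_sub_cancel_left] at h1
    have h2 : Tendsto (fun N => ‖a N • z N‖ / c) atTop (𝓝 0) := by
      simpa using (h1.norm.div_const c)
    rw [tendsto_zero_iff_norm_tendsto_zero]
    refine squeeze_zero (fun n => norm_nonneg _) (fun n => ?_) h2
    rw [Real.norm_eq_abs, le_div_iff₀ hc0, norm_smul, Real.norm_eq_abs]
    exact mul_le_mul_of_nonneg_left (hcz n) (abs_nonneg _)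
  -- backward: a → 0 implies convergence
  have conv : ∀ a : ℕ → ℝ, Tendsto a atTop (𝓝 0) →
      ∃ s, Tendsto (fun N => ∑ i ∈ Finset.range N, a i • z i) atTop (𝓝 s) := by
    intro a ha
    apply cauchySeq_tendsto_of_complete
    rw [Metric.cauchySeq_iff']
    intro ε hε
    have hC1 : (0:ℝ) < C + 1 := by linarith
    have hε' : 0 < ε / (2 * (C + 1)) := by positivity
    obtain ⟨N, hN⟩ := (Metric.tendsto_atTop.mp ha) _ hε'
    refine ⟨N, fun n hn => ?_⟩
    rw [dist_eq_norm]
    have heq : (∑ i ∈ Finset.range n, a i • z i) - (∑ i ∈ Finset.range N, a i • z i)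
        = ∑ i ∈ Finset.range n, (if N ≤ i then a i else 0) • z i := by
      have h3 : ∑ i ∈ Finset.range n, (if N ≤ i then a i else 0) • z i
          = ∑ i ∈ Finset.Ico N n, a i • z i := by
        rw [← Finset.sum_filter_add_sum_filter_not (Finset.range n) (fun i => N ≤ i)
          (fun i => (if N ≤ i then a i else 0) • z i)]
        have e1 : (Finset.range n).filter (fun i => N ≤ i) = Finset.Ico N n := by
          ext i; simp [Finset.mem_filter, Finset.mem_Ico, and_comm]
        rw [e1]
        have e2 : ∑ i ∈ Finset.Ico N n, (if N ≤ i then a i else 0) • z i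
            = ∑ i ∈ Finset.Ico N n, a i • z i :=
          Finset.sum_congr rfl fun i hi => by
            rw [if_pos (Finset.mem_Ico.mp hi).1]
        have e3 : ∑ i ∈ (Finset.range n).filter (fun i => ¬ N ≤ i),
            (if N ≤ i then a i else 0) • z i = 0 :=
          Finset.sum_eq_zero fun i hi => by
            rw [if_neg (Finset.mem_filter.mp hi).2, zero_smul]
        rw [e2, e3, add_zero]
      rw [h3, Finset.sum_Ico_eq_sub _ hn]
    rw [heq]
    have hb : ∀ i, |(if N ≤ i then a i else 0)| ≤ ε / (2 * (C + 1)) := by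
      intro i
      split_ifs with h
      · have := hN i h
        rw [Real.dist_eq, sub_zero] at this
        exact this.le
      · simpa using hε'.le
    calc ‖∑ i ∈ Finset.range n, (if N ≤ i then a i else 0) • z i‖
        ≤ C * (ε / (2 * (C + 1))) := hC _ _ hb n
      _ ≤ (C + 1) * (ε / (2 * (C + 1))) := by
          apply mul_le_mul_of_nonneg_right (by linarith) hε'.le
      _ = ε / 2 := by field_simp
      _ < ε := by linarith
  refine ⟨fun a => ⟨fun ⟨s, hs⟩ => back a s hs, conv a⟩, ?_⟩
  -- Part 2
  set M := (Submodule.span ℝ (Set.range z)).topologicalClosure with hM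
  have hex : ∀ a : C₀(ℕ, ℝ), ∃ s,
      Tendsto (fun N => ∑ i ∈ Finset.range N, a i • z i) atTop (𝓝 s) := by
    intro a
    apply conv
    have := zero_at_infty a
    rwa [cocompact_eq_atTop] at this
  choose Tf hTf using hex
  have hadd : ∀ a b : C₀(ℕ, ℝ), Tf (a + b) = Tf a + Tf b := by
    intro a b
    refine tendsto_nhds_unique (hTf (a + b)) ?_
    have := (hTf a).add (hTf b)
    refine this.congr fun N => ?_
    rw [← Finset.sum_add_distrib]
    exact Finset.sum_congr rfl fun i _ => by
      simp [add_smul]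
  have hsmul : ∀ (r : ℝ) (a : C₀(ℕ, ℝ)), Tf (r • a) = r • Tf a := by
    intro r a
    refine tendsto_nhds_unique (hTf (r • a)) ?_
    have := (hTf a).const_smul r
    refine this.congr fun N => ?_
    rw [Finset.smul_sum]
    exact Finset.sum_congr rfl fun i _ => by
      simp [smul_smul]
  have hptle : ∀ (a : C₀(ℕ, ℝ)) (i : ℕ), |a i| ≤ ‖a‖ := by
    intro a i
    have := BoundedContinuousFunction.norm_coe_le_norm a.toBCF i
    simpa [ZeroAtInftyContinuousMap.norm_toBCF_eq_norm] using this
  have hnorm : ∀ a : C₀(ℕ, ℝ), ‖Tf a‖ ≤ C * ‖a‖ := by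
    intro a
    refine le_of_tendsto (hTf a).norm (Eventually.of_forall fun N => ?_)
    exact hC _ _ (hptle a) N
  have hmem : ∀ a : C₀(ℕ, ℝ), Tf a ∈ M := by
    intro a
    refine (Submodule.isClosed_topologicalClosure _).mem_of_tendsto (hTf a)
      (Eventually.of_forall fun N => ?_)
    refine Submodule.le_topologicalClosure _ ?_
    exact Submodule.sum_mem _ fun i _ =>
      Submodule.smul_mem _ _ (Submodule.subset_span ⟨i, rfl⟩)
  set T₀ : C₀(ℕ, ℝ) →L[ℝ] X :=
    LinearMap.mkContinuous ⟨⟨Tf, hadd⟩, hsmul⟩ C hnorm with hT₀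
  have hT₀a : ∀ a, T₀ a = Tf a := fun a => rfl
  -- lower bound
  have hlowpt : ∀ (a : C₀(ℕ, ℝ)) (n : ℕ),
      ‖∑ i ∈ Finset.range n, a i • z i‖ ≤ Cb * ‖Tf a‖ := by
    intro a n
    refine ge_of_tendsto ((hTf a).norm.const_mul Cb) ?_
    filter_upwards [eventually_ge_atTop n] with N hN
    exact hG (fun i => a i) n N hN
  have hlow : ∀ a : C₀(ℕ, ℝ), ‖a‖ ≤ (2 * Cb / c) * ‖Tf a‖ := by
    intro a
    have key : ∀ n, |a n| ≤ (2 * Cb / c) * ‖Tf a‖ := by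
      intro n
      have h1 : ‖a n • z n‖ ≤ 2 * Cb * ‖Tf a‖ := by
        have : a n • z n = (∑ i ∈ Finset.range (n + 1), a i • z i)
            - ∑ i ∈ Finset.range n, a i • z i := by
          rw [Finset.sum_range_succ, add_sub_cancel_left]
        rw [this]
        calc ‖_ - _‖ ≤ ‖∑ i ∈ Finset.range (n+1), a i • z i‖
              + ‖∑ i ∈ Finset.range n, a i • z i‖ := norm_sub_le _ _
          _ ≤ Cb * ‖Tf a‖ + Cb * ‖Tf a‖ := add_le_add (hlowpt a (n+1)) (hlowpt a n)
          _ = 2 * Cb * ‖Tf a‖ := by ring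
      have h2 : |a n| * c ≤ ‖a n • z n‖ := by
        rw [norm_smul, Real.norm_eq_abs]
        exact mul_le_mul_of_nonneg_left (hcz n) (abs_nonneg _)
      rw [div_mul_eq_mul_div, le_div_iff₀ hc0]
      linarith
    rw [← ZeroAtInftyContinuousMap.norm_toBCF_eq_norm]
    refine (BoundedContinuousFunction.norm_le ?_).mpr fun n => by
      simpa using key n
    have h0 : (0:ℝ) ≤ 2 * Cb / c := by positivity
    exact mul_nonneg h0 (norm_nonneg _)
  -- T₀ is antilipschitz, range closed
  have hKnn : (0:ℝ) ≤ 2 * Cb / c := by positivity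
  have hanti : AntilipschitzWith (⟨2 * Cb / c, hKnn⟩ : NNReal) T₀ :=
    ContinuousLinearMap.antilipschitz_of_bound T₀ (fun a => hlow a)
  have hclosed : IsClosed (Set.range T₀) :=
    hanti.isClosed_range T₀.uniformContinuous
  -- the d i elements
  have dex : ∀ i : ℕ, ∃ d : C₀(ℕ, ℝ), ∀ n, d n = if n = i then 1 else 0 := by
    intro i
    refine ⟨⟨⟨fun n => if n = i then (1:ℝ) else 0, continuous_of_discreteTopology⟩, ?_⟩,
      fun n => rfl⟩
    rw [cocompact_eq_atTop]
    refine tendsto_const_nhds.congr' ?_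
    filter_upwards [eventually_gt_atTop i] with n hn
    simp [hn.ne']
  have hzrange : ∀ i, z i ∈ LinearMap.range (T₀ : C₀(ℕ, ℝ) →ₗ[ℝ] X) := by
    intro i
    obtain ⟨d, hd⟩ := dex i
    refine ⟨d, ?_⟩
    rw [ContinuousLinearMap.coe_coe, hT₀a]
    refine tendsto_nhds_unique (hTf d) ?_
    refine tendsto_const_nhds.congr' ?_
    filter_upwards [eventually_gt_atTop i] with N hN
    rw [eq_comm]
    have : ∀ j ∈ Finset.range N, d j • z j = if j = i then z j else 0 := by
      intro j _
      rw [hd j]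
      split_ifs <;> simp
    rw [Finset.sum_congr rfl this, Finset.sum_ite_eq' (Finset.range N) i]
    rw [if_pos (Finset.mem_range.mpr hN)]
  have hMV : M ≤ LinearMap.range (T₀ : C₀(ℕ, ℝ) →ₗ[ℝ] X) := by
    refine Submodule.topologicalClosure_minimal _ ?_ ?_
    · rw [Submodule.span_le]
      rintro x ⟨i, rfl⟩
      exact hzrange i
    · rw [LinearMap.coe_range]
      exact hclosed
  -- the restricted map
  set T : C₀(ℕ, ℝ) →L[ℝ] M := T₀.codRestrict M (fun a => hmem a) with hT
  have hker : LinearMap.ker (T : C₀(ℕ, ℝ) →ₗ[ℝ] M) = ⊥ := by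
    rw [LinearMap.ker_eq_bot']
    intro a ha
    have : Tf a = 0 := congrArg Subtype.val ha
    have h2 := hlow a
    rw [this, norm_zero, mul_zero] at h2
    exact norm_le_zero_iff.mp h2
  have hrange : LinearMap.range (T : C₀(ℕ, ℝ) →ₗ[ℝ] M) = ⊤ := by
    rw [LinearMap.range_eq_top]
    rintro ⟨y, hy⟩
    obtain ⟨a, ha⟩ := hMV hy
    exact ⟨a, Subtype.ext ha⟩
  haveI : CompleteSpace M := (Submodule.isClosed_topologicalClosure _).completeSpace_coe
  exact ⟨(ContinuousLinearEquiv.ofBijective T hker hrange).symm⟩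
end
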